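/- arXiv:math/0504438 — 3 statements merged into one kernel-verified Lean document; each statement's English description precedes it below -/
import Mathlib

section
/- Let α and β be types and let F be the free group on the sum type α ⊕ β. Let u be an element of the subgroup of F generated by the generators coming from α, and let v be an element of the subgroup of F generated by the generators coming from β. If u and v are conjugate in F (there exists g ∈ F with g u g⁻¹ = v), then u = 1 and v = 1. -/
/-
Let `π` be the endomorphism of `F` fixing the `α`-generators and sending the `β`-generators to `1`.
Then `π u = u` and `π v = 1`, so applying `π` to `g u g⁻¹ = v` gives `(π g) u (π g)⁻¹ = 1`,
whence `u = 1` and then `v = g u g⁻¹ = 1`.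
-/

theorem eq_one_of_conj_eq_of_map_eq {G : Type*} [Group G] (π : G →* G) {g u v : G}
    (hu : π u = u) (hv : π v = 1) (h : g * u * g⁻¹ = v) : u = 1 := by
  have : π g * u * (π g)⁻¹ = 1 := by rw [← hu, ← map_inv, ← map_mul, ← map_mul, h, hv]
  simpa [mul_inv_eq_one] using this

namespace FreeGroup

variable {α β : Type*}

def killInr : FreeGroup (α ⊕ β) →* FreeGroup (α ⊕ β) :=
  lift (Sum.elim (fun x => of (Sum.inl x)) 1)

theorem killInr_eq_self_of_mem_closure {u : FreeGroup (α ⊕ β)}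
    (hu : u ∈ Subgroup.closure (Set.range fun x : α => of (Sum.inl x))) : killInr u = u :=
  MonoidHom.eqOn_closure (g := MonoidHom.id _) (by rintro _ ⟨x, rfl⟩; exact lift_apply_of) hu

theorem killInr_eq_one_of_mem_closure {v : FreeGroup (α ⊕ β)}
    (hv : v ∈ Subgroup.closure (Set.range fun y : β => of (Sum.inr y))) : killInr v = 1 :=
  MonoidHom.eqOn_closure (g := 1) (by rintro _ ⟨y, rfl⟩; exact lift_apply_of) hv

end FreeGroup

/-- In the free group on a sum type `α ⊕ β`, if an element `u` of the subgroup generated by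
the `α`-generators is conjugate to an element `v` of the subgroup generated by the
`β`-generators, then `u = 1` and `v = 1`. -/
theorem freeGroup_sum_conjugate_of_left_right_subgroups_eq_one
    {α β : Type*} (u v : FreeGroup (α ⊕ β))
    (hu : u ∈ Subgroup.closure (Set.range fun x : α => FreeGroup.of (Sum.inl x)))
    (hv : v ∈ Subgroup.closure (Set.range fun y : β => FreeGroup.of (Sum.inr y)))
    (h : ∃ g : FreeGroup (α ⊕ β), g * u * g⁻¹ = v) :
    u = 1 ∧ v = 1 := by
  obtain ⟨g, rfl⟩ := h
  have hu1 : u = 1 := eq_one_of_conj_eq_of_map_eq FreeGroup.killInr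
    (FreeGroup.killInr_eq_self_of_mem_closure hu) (FreeGroup.killInr_eq_one_of_mem_closure hv) rfl
  simp [hu1]
end

section
/- (Itô's theorem) Let G be a group and let A and B be subgroups of G such that both A and B are abelian (any two elements of A commute, and any two elements of B commute) and G = AB, i.e., every element g of G can be written as g = a·b with a ∈ A and b ∈ B. Then G is metabelian: the commutator subgroup [G, G] of G is abelian; equivalently, the second term of the derived series of G is trivial. -/
/-!
Let `a, c ∈ A` and `b, d ∈ B`. Conjugating `⁅a, b⁆` by an element of `B` only moves the
left entry, within its left coset of `B`; conjugating by an element of `A` only moves the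
right entry, within its left coset of `A`. Since `G = AB = BA`, after each step the entries
can be brought back into `A` and `B`. Conjugating by `⁅c, d⁆ = c d c⁻¹ d⁻¹` therefore moves
the left entry by `d⁻¹` and back by `d`, and the right entry by `c⁻¹` and back by `c`, so it
fixes `⁅a, b⁆`. Hence the mixed commutators commute pairwise and generate an abelian
subgroup `⁅A, B⁆`; expanding `⁅a b, c d⁆` shows that it contains every commutator of `G`.
-/

open scoped commutatorElement

section Commute

variable {G : Type*} [Group G]

theorem commutatorElement_mul_left_of_commute (x : G) {w z : G} (h : Commute w z) :
    ⁅x * w, z⁆ = ⁅x, z⁆ := by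
  simp [commutatorElement_mul_left_eq_conj_mul, commutatorElement_eq_one_iff_commute.2 h]

theorem commutatorElement_mul_right_of_commute {x : G} (z : G) {w : G} (h : Commute x w) :
    ⁅x, z * w⁆ = ⁅x, z⁆ := by
  simp [commutatorElement_mul_right_eq_mul_conj, commutatorElement_eq_one_iff_commute.2 h]

theorem conj_commutatorElement_of_commute_right (x : G) {y z : G} (h : Commute y z) :
    y * ⁅x, z⁆ * y⁻¹ = ⁅y * x, z⁆ := by
  simp [commutatorElement_mul_left_eq_conj_mul, commutatorElement_eq_one_iff_commute.2 h]

theorem conj_commutatorElement_of_commute_left {x y : G} (z : G) (h : Commute y x) :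
    y * ⁅x, z⁆ * y⁻¹ = ⁅x, y * z⁆ := by
  simp [commutatorElement_mul_right_eq_mul_conj, commutatorElement_eq_one_iff_commute.2 h.symm,
    mul_assoc]

end Commute

namespace Subgroup

variable {G : Type*} [Group G] {A B : Subgroup G}

theorem exists_mem_mul_mem_swap (hAB : ∀ g : G, ∃ a ∈ A, ∃ b ∈ B, g = a * b) (g : G) :
    ∃ b ∈ B, ∃ a ∈ A, g = b * a := by
  obtain ⟨a, ha, b, hb, h⟩ := hAB g⁻¹
  exact ⟨b⁻¹, inv_mem hb, a⁻¹, inv_mem ha, by rw [← mul_inv_rev, ← h, inv_inv]⟩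

theorem conj_commutatorElement_mem_commutator
    (hA : ∀ a₁ ∈ A, ∀ a₂ ∈ A, a₁ * a₂ = a₂ * a₁)
    (hAB : ∀ g : G, ∃ a ∈ A, ∃ b ∈ B, g = a * b)
    {x a b : G} (hx : x ∈ A) (ha : a ∈ A) :
    x * ⁅a, b⁆ * x⁻¹ ∈ ⁅A, B⁆ := by
  obtain ⟨b', hb', a', ha', h⟩ := exists_mem_mul_mem_swap hAB (x * b)
  rw [conj_commutatorElement_of_commute_left b (hA x hx a ha), h,
    commutatorElement_mul_right_of_commute b' (hA a ha a' ha')]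
  exact commutator_mem_commutator ha hb'

theorem commute_commutatorElement_commutatorElement
    (hA : ∀ a₁ ∈ A, ∀ a₂ ∈ A, a₁ * a₂ = a₂ * a₁)
    (hB : ∀ b₁ ∈ B, ∀ b₂ ∈ B, b₁ * b₂ = b₂ * b₁)
    (hAB : ∀ g : G, ∃ a ∈ A, ∃ b ∈ B, g = a * b)
    {a b c d : G} (ha : a ∈ A) (hb : b ∈ B) (hc : c ∈ A) (hd : d ∈ B) :
    Commute ⁅c, d⁆ ⁅a, b⁆ := by
  obtain ⟨a₁, ha₁, b₁, hb₁, h₁⟩ := hAB (d⁻¹ * a)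
  obtain ⟨b₂, hb₂, a₂, ha₂, h₂⟩ := exists_mem_mul_mem_swap hAB (c⁻¹ * b)
  have e₁ : d * a₁ = a * b₁⁻¹ := by
    rw [eq_mul_inv_iff_mul_eq, mul_assoc, ← h₁, mul_inv_cancel_left]
  have e₂ : c * b₂ = b * a₂⁻¹ := by
    rw [eq_mul_inv_iff_mul_eq, mul_assoc, ← h₂, mul_inv_cancel_left]
  refine mul_inv_eq_iff_eq_mul.1 ?_
  calc ⁅c, d⁆ * ⁅a, b⁆ * ⁅c, d⁆⁻¹
      = c * (d * (c⁻¹ * (d⁻¹ * ⁅a, b⁆ * d⁻¹⁻¹) * c⁻¹⁻¹) * d⁻¹) * c⁻¹ := by group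
    _ = c * (d * (c⁻¹ * ⁅a₁, b⁆ * c⁻¹⁻¹) * d⁻¹) * c⁻¹ := by
      rw [conj_commutatorElement_of_commute_right a (hB d⁻¹ (inv_mem hd) b hb), h₁,
        commutatorElement_mul_left_of_commute a₁ (hB b₁ hb₁ b hb)]
    _ = c * (d * ⁅a₁, b₂⁆ * d⁻¹) * c⁻¹ := by
      rw [conj_commutatorElement_of_commute_left b (hA c⁻¹ (inv_mem hc) a₁ ha₁), h₂,
        commutatorElement_mul_right_of_commute b₂ (hA a₁ ha₁ a₂ ha₂)]
    _ = c * ⁅a, b₂⁆ * c⁻¹ := by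
      rw [conj_commutatorElement_of_commute_right a₁ (hB d hd b₂ hb₂), e₁,
        commutatorElement_mul_left_of_commute a (hB b₁⁻¹ (inv_mem hb₁) b₂ hb₂)]
    _ = ⁅a, b⁆ := by
      rw [conj_commutatorElement_of_commute_left b₂ (hA c hc a ha), e₂,
        commutatorElement_mul_right_of_commute b (hA a ha a₂⁻¹ (inv_mem ha₂))]

theorem isMulCommutative_commutator_of_forall_mem_mul
    (hA : ∀ a₁ ∈ A, ∀ a₂ ∈ A, a₁ * a₂ = a₂ * a₁)
    (hB : ∀ b₁ ∈ B, ∀ b₂ ∈ B, b₁ * b₂ = b₂ * b₁)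
    (hAB : ∀ g : G, ∃ a ∈ A, ∃ b ∈ B, g = a * b) :
    IsMulCommutative (⁅A, B⁆ : Subgroup G) :=
  isMulCommutative_closure <| by
    rintro _ ⟨c, hc, d, hd, rfl⟩ _ ⟨a, ha, b, hb, rfl⟩
    exact commute_commutatorElement_commutatorElement hA hB hAB ha hb hc hd

theorem commutator_le_commutator_of_forall_mem_mul
    (hA : ∀ a₁ ∈ A, ∀ a₂ ∈ A, a₁ * a₂ = a₂ * a₁)
    (hB : ∀ b₁ ∈ B, ∀ b₂ ∈ B, b₁ * b₂ = b₂ * b₁)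
    (hAB : ∀ g : G, ∃ a ∈ A, ∃ b ∈ B, g = a * b) :
    _root_.commutator G ≤ ⁅A, B⁆ := by
  rw [_root_.commutator_def, commutator_le]
  rintro g - h -
  obtain ⟨a, ha, b, hb, rfl⟩ := hAB g
  obtain ⟨c, hc, d, hd, rfl⟩ := hAB h
  have expand : ⁅a * b, c * d⁆ = (a * ⁅c, b⁆ * a⁻¹)⁻¹ * (c * ⁅a, d⁆ * c⁻¹) := by
    rw [commutatorElement_mul_left_eq_conj_mul,
      commutatorElement_mul_right_of_commute c (hB b hb d hd),
      ← conj_commutatorElement_of_commute_left d (hA c hc a ha), ← commutatorElement_inv]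
    group
  rw [expand]
  exact mul_mem (inv_mem (conj_commutatorElement_mem_commutator hA hAB ha hc))
    (conj_commutatorElement_mem_commutator hA hAB hc ha)

end Subgroup

/-- **Itô's theorem.**  If a group `G` is the product `G = A * B` of two abelian
subgroups `A` and `B`, then `G` is metabelian: its commutator subgroup is abelian. -/
theorem ito_metabelian_of_product_of_abelian_subgroups
    {G : Type*} [Group G] (A B : Subgroup G)
    (hA : ∀ a₁ ∈ A, ∀ a₂ ∈ A, a₁ * a₂ = a₂ * a₁)
    (hB : ∀ b₁ ∈ B, ∀ b₂ ∈ B, b₁ * b₂ = b₂ * b₁)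
    (hAB : ∀ g : G, ∃ a ∈ A, ∃ b ∈ B, g = a * b) :
    ∀ x ∈ commutator G, ∀ y ∈ commutator G, x * y = y * x := by
  have := Subgroup.isMulCommutative_commutator_of_forall_mem_mul hA hB hAB
  have hle := Subgroup.commutator_le_commutator_of_forall_mem_mul hA hB hAB
  exact fun x hx y hy ↦ setLike_mul_comm (hle hx) (hle hy)
end

section
/- Let α be a type containing at least two distinct elements and let F be the free group on α. Then F has no solvable subgroup of finite index: if H is a subgroup of F whose index [F : H] is finite, then H is not solvable. In particular, free groups of rank at least 2 are not virtually solvable (hence not virtually polycyclic). -/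
/-!
By Nielsen–Schreier, a subgroup `H` of `FreeGroup α` is itself free. A free group with two
distinct generators maps onto the non-solvable group `S₅`, which is generated by two elements;
hence a solvable free group has at most one generator and is abelian. If `H` has finite index it
contains positive powers `xᵐ` and `yⁿ`, and these do not commute because the reduced words of
`xᵐyⁿ` and `yⁿxᵐ` begin with different letters.
-/

open Subgroup Equiv.Perm

namespace FreeGroup

theorem isReduced_of_forall_snd_eq {β : Type*} {L : List (β × Bool)} {b : Bool}
    (hL : ∀ p ∈ L, p.2 = b) : IsReduced L :=
  (List.pairwise_of_forall_mem_list fun p hp q hq _ => (hL p hp).trans (hL q hq).symm :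
    L.Pairwise fun p q => p.1 = q.1 → p.2 = q.2).isChain

theorem toWord_of_pow_mul_of_pow {β : Type*} [DecidableEq β] (x y : β) (m n : ℕ) :
    (of x ^ m * of y ^ n).toWord = List.replicate m (x, true) ++ List.replicate n (y, true) := by
  rw [toWord_mul, toWord_of_pow, toWord_of_pow]
  refine IsReduced.reduce_eq (isReduced_of_forall_snd_eq (b := true) ?_)
  simp +contextual [List.mem_replicate]

theorem not_commute_of_pow_of_pow {β : Type*} {x y : β} (hxy : x ≠ y) {m n : ℕ}
    (hm : m ≠ 0) (hn : n ≠ 0) : ¬ Commute (of x ^ m) (of y ^ n) := by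
  classical
  intro h
  have hhead := congrArg (fun g => g.toWord.head?) h.eq
  simp only [toWord_of_pow_mul_of_pow, List.head?_append, List.head?_replicate, hm, hn,
    ↓reduceIte, Option.or_some, Option.getD_some, Option.some.injEq, Prod.mk.injEq,
    and_true] at hhead
  exact hxy hhead

theorem exists_surjective_hom_of_closure_pair_eq_top {β G : Type*} [Group G] {u v : β}
    (huv : u ≠ v) {g h : G} (hgh : closure {g, h} = ⊤) :
    ∃ φ : FreeGroup β →* G, Function.Surjective φ := by
  classical
  refine ⟨lift (Function.update (fun _ => g) v h), lift_surjective_iff_closure_range_eq_top.2 ?_⟩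
  refine eq_top_mono (closure_mono ?_) hgh
  rintro _ (rfl | rfl)
  · exact ⟨u, by simp [huv]⟩
  · exact ⟨v, by simp⟩

theorem not_isSolvable {β : Type*} {u v : β} (huv : u ≠ v) :
    ¬ Group.IsSolvable (FreeGroup β) := by
  intro _
  obtain ⟨φ, hφ⟩ := exists_surjective_hom_of_closure_pair_eq_top huv
    (closure_cycle_adjacent_swap (isCycle_finRotate (n := 3)) support_finRotate 0)
  exact not_isSolvable_fin_5 (Group.isSolvable_of_surjective hφ)

theorem commute_of_subsingleton {β : Type*} [Subsingleton β] (a b : FreeGroup β) :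
    Commute a b := by
  have hcomm : ∀ g ∈ Set.range (of : β → FreeGroup β), ∀ h ∈ Set.range of, g * h = h * g := by
    rintro _ ⟨x, rfl⟩ _ ⟨y, rfl⟩
    rw [Subsingleton.elim x y]
  have hle := closure_le_centralizer_centralizer (Set.range (of : β → FreeGroup β))
  rw [closure_range_of] at hle
  exact Set.centralizer_centralizer_comm_of_comm hcomm a (hle trivial) b (hle trivial)

end FreeGroup

theorem IsFreeGroup.commute_of_isSolvable {G : Type*} [Group G] [IsFreeGroup G]
    [Group.IsSolvable G] (a b : G) : Commute a b := by
  let e := IsFreeGroup.toFreeGroup G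
  have : Subsingleton (IsFreeGroup.Generators G) := by
    rw [← not_nontrivial_iff_subsingleton]
    rintro ⟨u, v, huv⟩
    exact FreeGroup.not_isSolvable huv (Group.isSolvable_of_surjective (f := e.toMonoidHom)
      e.surjective)
  simpa using (FreeGroup.commute_of_subsingleton (e a) (e b)).map e.symm

/-- A free group of rank at least `2` has no solvable subgroup of finite index;
in particular it is not virtually solvable (hence not virtually polycyclic). -/
theorem freeGroup_no_finite_index_solvable_subgroup
    {α : Type*} (x y : α) (hxy : x ≠ y)
    (H : Subgroup (FreeGroup α)) (hH : H.index ≠ 0) :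
    ¬ IsSolvable H := by
  intro hsolv
  have : Group.IsSolvable H := hsolv
  obtain ⟨m, hm, -, hxm⟩ := exists_pow_mem_of_index_ne_zero hH (FreeGroup.of x)
  obtain ⟨n, hn, -, hyn⟩ := exists_pow_mem_of_index_ne_zero hH (FreeGroup.of y)
  have hcomm := IsFreeGroup.commute_of_isSolvable (⟨_, hxm⟩ : H) ⟨_, hyn⟩
  exact FreeGroup.not_commute_of_pow_of_pow hxy hm.ne' hn.ne' (congrArg Subtype.val hcomm)
end
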